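/- arXiv:1911.07155 — 4 statements merged into one kernel-verified Lean document; each statement's English description precedes it below -/
import Mathlib

section
/- Let n ≥ 4 and define, for 1 ≤ i ≤ j ≤ n-1, the type D_n coroot values h_{i,j} acting on a weight λ by λ(h_{i,j}) = λ(h_i) + λ(h_{i+1}) + ... + λ(h_j), and define β_{i,j} = α_i + ... + α_{j-1} + 2(α_j + ... + α_{n-2}) + α_{n-1} + α_n for 1 ≤ i < j ≤ n-1, so that λ(h_{β_{i,j}}) = λ(h_{i,n-1}) + λ(h_{j,n-2}) + λ(h_n) where λ(h_{j,n}) means λ(h_j)+...+λ(h_{n-2})+λ(h_n). Suppose λ₁, λ₂ : {1,...,n} → ℤ≥0 satisfy: (a) λ₁(i) + λ₂(i) ≤ 1 for all i; (b) if λ_r(n-1) + λ_r(n) > 0 then λ_p(n-1) + λ_p(n) = 0 for {r,p} = {1,2}; (c) for 1 ≤ i < j ≤ n with (i,j) ≠ (n-1,n), if λ_r(i) = 1 = λ_r(j) then there is i < s < j with λ_p(s) = 1, where {r,p} = {1,2}. Then for every root of the form α_{i,j} (i.e., α_i + ... + α_j, or α_i + ... + α_{n-2} + α_n when j = n), we have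 |λ₁(h_{α_{i,j}}) − λ₂(h_{α_{i,j}})| ≤ 1. -/
/-- The value `λ(h_a) + ⋯ + λ(h_b)` of a weight on a sum of consecutive simple coroots. -/
def hIcc (lam : ℕ → ℤ) (a b : ℕ) : ℤ := ∑ s ∈ Finset.Icc a b, lam s

/-- Pairing of a weight with the coroot of the type-A root `α_{i,j}` in type `D_n`
(`α_{i,n} = α_i + ⋯ + α_{n-2} + α_n`); zero if `i > j`. -/
def hA (n : ℕ) (lam : ℕ → ℤ) (i j : ℕ) : ℤ :=
  if j < i then 0 else if j = n then hIcc lam i (n - 2) + lam n else hIcc lam i j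

/-- Pairing of a weight with the coroot of `β_{i,j}`:
`λ(h_{β_{i,j}}) = λ(h_{i,n-1}) + λ(h_{j,n-2}) + λ(h_n)`. -/
def hBeta (n : ℕ) (lam : ℕ → ℤ) (i j : ℕ) : ℤ :=
  hIcc lam i (n - 1) + hIcc lam j (n - 2) + lam n

/-- An interlacing pair of type `D_n` weights (weights are `ℕ → ℤ`, with values on
indices `1,…,n`; nonnegativity and the conditions (a)–(c) are built in). -/
def Interlacing (n : ℕ) (l1 l2 : ℕ → ℤ) : Prop :=
  (∀ i, 1 ≤ i → i ≤ n → 0 ≤ l1 i ∧ 0 ≤ l2 i ∧ l1 i + l2 i ≤ 1) ∧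
  (0 < l1 (n - 1) + l1 n → l2 (n - 1) + l2 n = 0) ∧
  (0 < l2 (n - 1) + l2 n → l1 (n - 1) + l1 n = 0) ∧
  (∀ i j, 1 ≤ i → i < j → j ≤ n → ¬(i = n - 1 ∧ j = n) →
    (l1 i = 1 → l1 j = 1 → ∃ s, i < s ∧ s < j ∧ l2 s = 1) ∧
    (l2 i = 1 → l2 j = 1 → ∃ s, i < s ∧ s < j ∧ l1 s = 1))

/-!
Every weight in an interlacing pair takes only the values `0` and `1` on `1, …, n`, so on
the support `T` of the coroot of `α_{i,j}` both pairings count ones. Condition (c) puts a one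
of each weight strictly between any two ones of the other, and these interlacing ones lie
in `T`: for `j = n` the only index of `(x, n)` outside `T` is `n - 1`, which condition (b)
rules out. Two interlaced finite sets of a linear order have cardinalities differing by at
most one.
-/

open Finset

def OnesSeparatedBy {α : Type*} [LinearOrder α] (T : Finset α) (f g : α → ℤ) : Prop :=
  ∀ x ∈ T, ∀ y ∈ T, x < y → f x = 1 → f y = 1 → ∃ s ∈ T, x < s ∧ s < y ∧ g s = 1

lemma sum_eq_card_filter_eq_one {α : Type*} {T : Finset α} {f : α → ℤ}
    (hf : ∀ x ∈ T, f x = 0 ∨ f x = 1) : ∑ x ∈ T, f x = #(T.filter (f · = 1)) := by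
  rw [natCast_card_filter]
  refine sum_congr rfl fun x hx => ?_
  rcases hf x hx with h | h <;> simp [h]

section LinearOrder

variable {α : Type*} [LinearOrder α]

lemma card_le_card_add_one_of_separated {A B : Finset α}
    (hsep : ∀ x ∈ A, ∀ y ∈ A, x < y → ∃ s ∈ B, x < s ∧ s < y) : #A ≤ #B + 1 := by
  induction A using Finset.induction_on_max generalizing B with
  | empty => simp
  | insert a A hlt ih =>
    rw [card_insert_of_notMem fun ha => (hlt a ha).false]
    rcases A.eq_empty_or_nonempty with rfl | hne
    · simp
    have hmax := A.max'_mem hne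
    obtain ⟨b, hb, hmb, -⟩ :=
      hsep _ (mem_insert_of_mem hmax) a (mem_insert_self a A) (hlt _ hmax)
    have hA : #A ≤ #(B.erase b) + 1 := ih fun x hx y hy hxy => by
      obtain ⟨s, hs, hxs, hsy⟩ := hsep x (mem_insert_of_mem hx) y (mem_insert_of_mem hy) hxy
      have hsb : s ≠ b := (hsy.trans_le (A.le_max' y hy)).trans hmb |>.ne
      exact ⟨s, mem_erase.2 ⟨hsb, hs⟩, hxs, hsy⟩
    have := card_erase_add_one hb
    omega

lemma OnesSeparatedBy.card_filter_le {T : Finset α} {f g : α → ℤ}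
    (hfg : OnesSeparatedBy T f g) :
    #(T.filter (f · = 1)) ≤ #(T.filter (g · = 1)) + 1 := by
  refine card_le_card_add_one_of_separated fun x hx y hy hxy => ?_
  rw [mem_filter] at hx hy
  obtain ⟨s, hs, hxs, hsy, hgs⟩ := hfg x hx.1 y hy.1 hxy hx.2 hy.2
  exact ⟨s, mem_filter.2 ⟨hs, hgs⟩, hxs, hsy⟩

lemma abs_sum_sub_sum_le_one {T : Finset α} {f g : α → ℤ}
    (hf : ∀ x ∈ T, f x = 0 ∨ f x = 1) (hg : ∀ x ∈ T, g x = 0 ∨ g x = 1)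
    (hfg : OnesSeparatedBy T f g) (hgf : OnesSeparatedBy T g f) :
    |∑ x ∈ T, f x - ∑ x ∈ T, g x| ≤ 1 := by
  rw [sum_eq_card_filter_eq_one hf, sum_eq_card_filter_eq_one hg, abs_le]
  have := hfg.card_filter_le
  have := hgf.card_filter_le
  constructor <;> omega

end LinearOrder

lemma hA_of_lt {n : ℕ} {i j : ℕ} (lam : ℕ → ℤ) (hij : i ≤ j) (hjn : j < n) :
    hA n lam i j = ∑ s ∈ Icc i j, lam s := by
  rw [hA, if_neg hij.not_gt, if_neg hjn.ne, hIcc]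

lemma hA_last {n i : ℕ} (lam : ℕ → ℤ) (hi : 1 ≤ i) (hin : i ≤ n) :
    hA n lam i n = ∑ s ∈ insert n (Icc i (n - 2)), lam s := by
  have hn : n ∉ Icc i (n - 2) := fun h => by simp only [mem_Icc] at h; omega
  rw [hA, if_neg hin.not_gt, if_pos rfl, sum_insert hn, hIcc, add_comm]

namespace Interlacing

variable {n : ℕ} {l1 l2 : ℕ → ℤ}

lemma symm (h : Interlacing n l1 l2) : Interlacing n l2 l1 :=
  ⟨fun i hi hin => by obtain ⟨h1, h2, h12⟩ := h.1 i hi hin; exact ⟨h2, h1, by omega⟩,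
    h.2.2.1, h.2.1, fun i j hi hij hjn hne => (h.2.2.2 i j hi hij hjn hne).symm⟩

lemma eq_zero_or_eq_one (h : Interlacing n l1 l2) {x : ℕ} (hx : 1 ≤ x) (hxn : x ≤ n) :
    l1 x = 0 ∨ l1 x = 1 := by
  obtain ⟨h1, h2, h12⟩ := h.1 x hx hxn
  omega

lemma exists_between (h : Interlacing n l1 l2) {x y : ℕ} (hx : 1 ≤ x) (hxy : x < y)
    (hyn : y ≤ n) (hne : ¬(x = n - 1 ∧ y = n)) (h1x : l1 x = 1) (h1y : l1 y = 1) :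
    ∃ s, x < s ∧ s < y ∧ l2 s = 1 :=
  (h.2.2.2 x y hx hxy hyn hne).1 h1x h1y

lemma ne_one_of_eq_one_last (h : Interlacing n l1 l2) (hn : 2 ≤ n) (h1n : l1 n = 1) :
    l2 (n - 1) ≠ 1 := by
  obtain ⟨-, h2, -⟩ := h.1 n (by omega) le_rfl
  obtain ⟨h1, -, -⟩ := h.1 (n - 1) (by omega) (by omega)
  have := h.2.1 (by omega)
  omega

lemma abs_sum_sub_sum_le_one (h : Interlacing n l1 l2) {T : Finset ℕ}
    (hT : ∀ x ∈ T, 1 ≤ x ∧ x ≤ n) (h12 : OnesSeparatedBy T l1 l2)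
    (h21 : OnesSeparatedBy T l2 l1) : |∑ x ∈ T, l1 x - ∑ x ∈ T, l2 x| ≤ 1 :=
  _root_.abs_sum_sub_sum_le_one (fun x hx => h.eq_zero_or_eq_one (hT x hx).1 (hT x hx).2)
    (fun x hx => h.symm.eq_zero_or_eq_one (hT x hx).1 (hT x hx).2) h12 h21

lemma onesSeparatedBy_Icc (h : Interlacing n l1 l2) {i j : ℕ} (hi : 1 ≤ i) (hjn : j < n) :
    OnesSeparatedBy (Icc i j) l1 l2 := by
  intro x hx y hy hxy h1x h1y
  rw [mem_Icc] at hx hy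
  obtain ⟨s, hxs, hsy, h2s⟩ := h.exists_between (by omega) hxy (by omega) (by omega) h1x h1y
  exact ⟨s, mem_Icc.2 ⟨by omega, by omega⟩, hxs, hsy, h2s⟩

lemma onesSeparatedBy_insert_last (h : Interlacing n l1 l2) {i : ℕ} (hi : 1 ≤ i) :
    OnesSeparatedBy (insert n (Icc i (n - 2))) l1 l2 := by
  intro x hx y hy hxy h1x h1y
  simp only [mem_insert, mem_Icc] at hx hy
  have hx : i ≤ x ∧ x ≤ n - 2 := by omega
  obtain ⟨s, hxs, hsy, h2s⟩ := h.exists_between (by omega) hxy (by omega) (by omega) h1x h1y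
  have hs : s ≠ n - 1 := by
    rintro rfl
    obtain rfl : y = n := by omega
    exact h.ne_one_of_eq_one_last (by omega) h1y h2s
  exact ⟨s, mem_insert_of_mem (mem_Icc.2 ⟨by omega, by omega⟩), hxs, hsy, h2s⟩

end Interlacing

theorem stmt0_general (n : ℕ) (l1 l2 : ℕ → ℤ) (h : Interlacing n l1 l2) :
    ∀ i j, 1 ≤ i → i ≤ j → j ≤ n → |hA n l1 i j - hA n l2 i j| ≤ 1 := by
  intro i j hi hij hjn
  rcases hjn.lt_or_eq with hjn | rfl
  · rw [hA_of_lt l1 hij hjn, hA_of_lt l2 hij hjn]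
    exact h.abs_sum_sub_sum_le_one (fun x hx => by rw [mem_Icc] at hx; omega)
      (h.onesSeparatedBy_Icc hi hjn) (h.symm.onesSeparatedBy_Icc hi hjn)
  · rw [hA_last l1 hi hij, hA_last l2 hi hij]
    exact h.abs_sum_sub_sum_le_one
      (fun x hx => by simp only [mem_insert, mem_Icc] at hx; omega)
      (h.onesSeparatedBy_insert_last hi) (h.symm.onesSeparatedBy_insert_last hi)

/-- For an interlacing pair in type `D_n`, every type-A root `α_{i,j}` satisfies
`|λ₁(h_{α_{i,j}}) − λ₂(h_{α_{i,j}})| ≤ 1`. -/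
theorem stmt0 (n : ℕ) (hn : 4 ≤ n) (l1 l2 : ℕ → ℤ) (h : Interlacing n l1 l2) :
    ∀ i j, 1 ≤ i → i ≤ j → j ≤ n → |hA n l1 i j - hA n l2 i j| ≤ 1 :=
  stmt0_general n l1 l2 h
end

section
/- Let (λ₁, λ₂) be an interlacing pair of type D_n weights with λ₁(h_{n-1}) + λ₁(h_n) = 2 (so λ₁(h_{n-1}) = λ₁(h_n) = 1 and λ₂(h_{n-1}) = λ₂(h_n) = 0). Then for 1 ≤ i < j ≤ n-1: |λ₁(h_{β_{i,j}}) − λ₂(h_{β_{i,j}})| = 2 if and only if (λ₁ − λ₂)(h_{i,n-2}) = 0 and (λ₁ − λ₂)(h_{j,n-2}) = 0, where (λ₁−λ₂)(h_{a,b}) = Σ_{s=a}^{b} (λ₁(h_s) − λ₂(h_s)). Moreover, in this situation λ₁(h_{β_{i,j}}) − λ₂(h_{β_{i,j}}) ≥ 0 always. -/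
/-!
Write `D(a) = (λ₁ − λ₂)(h_{a,n-1})`. Since `λ₁(h_{n-1}) = 1`, the marks (indices of value `1`)
of `λ₁` and `λ₂` on `1, …, n-1` alternate and end with a mark of `λ₁`, so every tail sum `D(a)`
is `1` or `0`, according to whether the first mark at or after `a` belongs to `λ₁` or to `λ₂`.
As `(λ₁ − λ₂)(h_{β_{i,j}}) = D(i) + D(j)`, this difference lies in `{0, 1, 2}`, and it equals `2`
exactly when `D(i) = D(j) = 1`, i.e. when `(λ₁ − λ₂)(h_{i,n-2}) = (λ₁ − λ₂)(h_{j,n-2}) = 0`.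
-/

lemma hIcc_self (lam : ℕ → ℤ) (a : ℕ) : hIcc lam a a = lam a := by
  simp [hIcc]

lemma hIcc_eq_add_hIcc_succ (lam : ℕ → ℤ) {a b : ℕ} (hab : a ≤ b) :
    hIcc lam a b = lam a + hIcc lam (a + 1) b := by
  rw [hIcc, hIcc, Finset.Icc_eq_cons_Ioc hab, Finset.sum_cons, Finset.Icc_add_one_left_eq_Ioc]

lemma hIcc_succ_right (lam : ℕ → ℤ) {a b : ℕ} (hab : a ≤ b + 1) :
    hIcc lam a (b + 1) = hIcc lam a b + lam (b + 1) :=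
  Finset.sum_Icc_succ_top hab lam

def AlternatingOn (l1 l2 : ℕ → ℤ) (lo hi : ℕ) : Prop :=
  (∀ s, lo ≤ s → s ≤ hi → 0 ≤ l1 s ∧ 0 ≤ l2 s ∧ l1 s + l2 s ≤ 1) ∧
  ∀ i j, lo ≤ i → i < j → j ≤ hi →
    (l1 i = 1 → l1 j = 1 → ∃ s, i < s ∧ s < j ∧ l2 s = 1) ∧
    (l2 i = 1 → l2 j = 1 → ∃ s, i < s ∧ s < j ∧ l1 s = 1)

/-- The first mark of the pair in `[a, hi]` is a mark of `l1`. -/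
def Leads (l1 l2 : ℕ → ℤ) (a hi : ℕ) : Prop :=
  ∃ t, a ≤ t ∧ t ≤ hi ∧ l1 t = 1 ∧ ∀ s, a ≤ s → s < t → l2 s = 0

section

variable {l1 l2 : ℕ → ℤ} {lo hi a : ℕ}

lemma AlternatingOn.symm (h : AlternatingOn l1 l2 lo hi) : AlternatingOn l2 l1 lo hi :=
  ⟨fun s hs hs' => by obtain ⟨h1, h2, h3⟩ := h.1 s hs hs'; omega,
    fun i j hi hij hj => (h.2 i j hi hij hj).symm⟩

lemma Leads.of_eq_one (ha : a ≤ hi) (h : l1 a = 1) : Leads l1 l2 a hi :=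
  ⟨a, le_rfl, ha, h, fun _ hs hs' => absurd hs' (not_lt.2 hs)⟩

lemma Leads.of_succ (h : Leads l1 l2 (a + 1) hi) (ha : l2 a = 0) : Leads l1 l2 a hi := by
  obtain ⟨t, hat, hth, ht, hbefore⟩ := h
  refine ⟨t, by omega, hth, ht, fun s hs hst => ?_⟩
  rcases hs.eq_or_lt with rfl | hs
  · exact ha
  · exact hbefore s hs hst

lemma AlternatingOn.not_leads_succ (h : AlternatingOn l1 l2 lo hi) (hlo : lo ≤ a)
    (ha : l1 a = 1) : ¬Leads l1 l2 (a + 1) hi := by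
  rintro ⟨t, hat, hth, ht, hbefore⟩
  obtain ⟨s, has, hst, hs⟩ := (h.2 a t hlo (by omega) hth).1 ha ht
  have := hbefore s has hst
  omega

theorem AlternatingOn.hIcc_sub_eq_one_or_zero (h : AlternatingOn l1 l2 lo hi) (htop : l1 hi = 1)
    (hlo : lo ≤ a) (ha : a ≤ hi) :
    (hIcc l1 a hi - hIcc l2 a hi = 1 ∧ Leads l1 l2 a hi) ∨
      (hIcc l1 a hi - hIcc l2 a hi = 0 ∧ Leads l2 l1 a hi) := by
  induction ha using Nat.decreasingInduction with
  | self =>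
    have hl2 : l2 hi = 0 := by obtain ⟨-, h2, h12⟩ := h.1 hi hlo le_rfl; omega
    exact .inl ⟨by simp only [hIcc_self, htop, hl2]; norm_num, .of_eq_one le_rfl htop⟩
  | of_succ a ha ih =>
    rw [hIcc_eq_add_hIcc_succ l1 ha.le, hIcc_eq_add_hIcc_succ l2 ha.le]
    obtain ⟨h1, h2, h12⟩ := h.1 a hlo ha.le
    rcases ih (by omega) with ⟨hD, hlead⟩ | ⟨hD, hlead⟩
    · have h1a : l1 a ≠ 1 := fun h1a => h.not_leads_succ hlo h1a hlead
      by_cases h2a : l2 a = 1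
      · exact .inr ⟨by omega, .of_eq_one ha.le h2a⟩
      · exact .inl ⟨by omega, hlead.of_succ (by omega)⟩
    · have h2a : l2 a ≠ 1 := fun h2a => h.symm.not_leads_succ hlo h2a hlead
      by_cases h1a : l1 a = 1
      · exact .inl ⟨by omega, .of_eq_one ha.le h1a⟩
      · exact .inr ⟨by omega, hlead.of_succ (by omega)⟩

end

section

variable {n : ℕ} {l1 l2 : ℕ → ℤ}

lemma Interlacing.alternatingOn (h : Interlacing n l1 l2) : AlternatingOn l1 l2 1 (n - 1) :=
  ⟨fun s hs hs' => h.1 s hs (by omega),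
    fun i j hi hij hj => h.2.2.2 i j hi hij (by omega) (by omega)⟩

lemma Interlacing.top_marks (h : Interlacing n l1 l2) (hn : 2 ≤ n)
    (h1 : l1 (n - 1) + l1 n = 2) : l1 (n - 1) = 1 ∧ l1 n = 1 ∧ l2 (n - 1) = 0 ∧ l2 n = 0 := by
  obtain ⟨-, h2, hsum⟩ := h.1 (n - 1) (by omega) (by omega)
  obtain ⟨-, h2', hsum'⟩ := h.1 n (by omega) le_rfl
  omega

end

theorem stmt4_general (n : ℕ) (l1 l2 : ℕ → ℤ) (h : Interlacing n l1 l2)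
    (h1 : l1 (n - 1) + l1 n = 2) :
    ∀ i j, 1 ≤ i → i < j → j ≤ n - 1 →
      ((|hBeta n l1 i j - hBeta n l2 i j| = 2 ↔
          (hIcc l1 i (n - 2) - hIcc l2 i (n - 2) = 0 ∧
            hIcc l1 j (n - 2) - hIcc l2 j (n - 2) = 0)) ∧
        0 ≤ hBeta n l1 i j - hBeta n l2 i j) := by
  intro i j hi hij hj
  obtain ⟨h1n1, h1n, h2n1, h2n⟩ := h.top_marks (by omega) h1
  have htail (lam : ℕ → ℤ) (a : ℕ) (ha : a ≤ n - 1) :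
      hIcc lam a (n - 1) = hIcc lam a (n - 2) + lam (n - 1) := by
    rw [show n - 1 = n - 2 + 1 by omega]
    exact hIcc_succ_right lam (by omega)
  have htail_sub (a : ℕ) (ha : 1 ≤ a) (ha' : a ≤ n - 1) :
      hIcc l1 a (n - 1) - hIcc l2 a (n - 1) = 0 ∨ hIcc l1 a (n - 1) - hIcc l2 a (n - 1) = 1 := by
    rcases h.alternatingOn.hIcc_sub_eq_one_or_zero h1n1 ha ha' with ⟨hD, -⟩ | ⟨hD, -⟩ <;> omega
  have hi1 := htail l1 i (by omega)
  have hi2 := htail l2 i (by omega)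
  have hj1 := htail l1 j hj
  have hj2 := htail l2 j hj
  have hDi := htail_sub i hi (by omega)
  have hDj := htail_sub j (by omega) hj
  rw [hBeta, hBeta, abs_eq zero_le_two]
  omega

/-- If `λ₁(h_{n-1}) + λ₁(h_n) = 2` for an interlacing pair, then
`|λ₁(h_{β_{i,j}}) − λ₂(h_{β_{i,j}})| = 2` iff `(λ₁−λ₂)(h_{i,n-2}) = 0 = (λ₁−λ₂)(h_{j,n-2})`;
moreover the difference is always nonnegative. -/
theorem stmt4 (n : ℕ) (hn : 4 ≤ n) (l1 l2 : ℕ → ℤ) (h : Interlacing n l1 l2)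
    (h1 : l1 (n - 1) + l1 n = 2) :
    ∀ i j, 1 ≤ i → i < j → j ≤ n - 1 →
      ((|hBeta n l1 i j - hBeta n l2 i j| = 2 ↔
          (hIcc l1 i (n - 2) - hIcc l2 i (n - 2) = 0 ∧
            hIcc l1 j (n - 2) - hIcc l2 j (n - 2) = 0)) ∧
        0 ≤ hBeta n l1 i j - hBeta n l2 i j) :=
  stmt4_general n l1 l2 h h1
end

section
/- Let (λ₁, λ₂) be an interlacing pair of type D_n weights with λ₁(h_{n-1}) + λ₁(h_n) = 2 and (λ₁+λ₂)(h_{n-2}) = 0, and suppose (λ₁,λ₂) ≠ (ω_{n-1}+ω_n, ω_{n-2}). Then β_{n-2,n-1} ∈ R(λ₁,λ₂), i.e., |λ₁(h_{β_{n-2,n-1}}) − λ₂(h_{β_{n-2,n-1}})| = 2, and for every β_{i,j} ∈ R(λ₁,λ₂), the difference β_{i,j} − β_{n-2,n-1} equals α_{i,n-3} + α_{j,n-2} (a sum of at most two positive roots, interpreting α_{a,b} as zero if a > b). -/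
/-- Coefficient function (on simple roots) of `α_{a,b} = α_a + ⋯ + α_b`; zero if `a > b`. -/
def alphaCoeff (a b k : ℕ) : ℤ := if a ≤ k ∧ k ≤ b then 1 else 0

/-- Coefficient function of `β_{i,j} = α_i + ⋯ + α_{j-1} + 2(α_j + ⋯ + α_{n-2}) + α_{n-1} + α_n`. -/
def betaCoeff (n i j k : ℕ) : ℤ :=
  (if i ≤ k ∧ k ≤ j - 1 then 1 else 0) + 2 * (if j ≤ k ∧ k ≤ n - 2 then 1 else 0) +
    (if k = n - 1 ∨ k = n then 1 else 0)

theorem hBeta_sub_two_sub_one {n : ℕ} (hn : 2 ≤ n) (lam : ℕ → ℤ) :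
    hBeta n lam (n - 2) (n - 1) = lam (n - 2) + lam (n - 1) + lam n := by
  have hempty : Finset.Icc (n - 1) (n - 2) = ∅ := Finset.Icc_eq_empty (by omega)
  have hpair : Finset.Icc (n - 2) (n - 1) = {n - 2, n - 1} := by
    ext x
    simp only [Finset.mem_Icc, Finset.mem_insert, Finset.mem_singleton]
    omega
  rw [hBeta, hIcc, hIcc, hempty, hpair, Finset.sum_pair (by omega), Finset.sum_empty]
  ring

theorem hBeta_sub_two_sub_one_sub_eq_two {n : ℕ} (hn : 3 ≤ n) {l1 l2 : ℕ → ℤ}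
    (h : Interlacing n l1 l2) (h1 : l1 (n - 1) + l1 n = 2) (h2 : l1 (n - 2) + l2 (n - 2) = 0) :
    hBeta n l1 (n - 2) (n - 1) - hBeta n l2 (n - 2) (n - 1) = 2 := by
  -- With `0 ≤ l1 s, l2 s` and `l1 s + l2 s ≤ 1`, `h1` forces `l1 = 1, l2 = 0` at `n - 1` and `n`,
  -- and `h2` forces both to vanish at `n - 2`.
  have hb := h.1
  have b2 := hb (n - 2) (by omega) (by omega)
  have b1 := hb (n - 1) (by omega) (by omega)
  have b0 := hb n (by omega) le_rfl
  rw [hBeta_sub_two_sub_one (by omega), hBeta_sub_two_sub_one (by omega)]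
  omega

theorem betaCoeff_sub_betaCoeff_sub_two_sub_one {n i j : ℕ} (hi : 1 ≤ i) (hij : i < j)
    (hjn : j ≤ n - 1) (k : ℕ) :
    betaCoeff n i j k - betaCoeff n (n - 2) (n - 1) k =
      alphaCoeff i (n - 3) k + alphaCoeff j (n - 2) k := by
  unfold betaCoeff alphaCoeff
  split_ifs <;> omega

theorem stmt6_general (n : ℕ) (hn : 4 ≤ n) (l1 l2 : ℕ → ℤ) (h : Interlacing n l1 l2)
    (h1 : l1 (n - 1) + l1 n = 2) (h2 : l1 (n - 2) + l2 (n - 2) = 0) :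
    |hBeta n l1 (n - 2) (n - 1) - hBeta n l2 (n - 2) (n - 1)| = 2 ∧
      ∀ i j, 1 ≤ i → i < j → j ≤ n - 1 → |hBeta n l1 i j - hBeta n l2 i j| = 2 →
        ∀ k, betaCoeff n i j k - betaCoeff n (n - 2) (n - 1) k =
          alphaCoeff i (n - 3) k + alphaCoeff j (n - 2) k := by
  refine ⟨?_, fun i j hi hij hjn _ => betaCoeff_sub_betaCoeff_sub_two_sub_one hi hij hjn⟩
  rw [hBeta_sub_two_sub_one_sub_eq_two (by omega) h h1 h2]
  norm_num

/-- Case `λ₁(h_{n-1}) + λ₁(h_n) = 2`, `(λ₁+λ₂)(h_{n-2}) = 0`, `(λ₁,λ₂) ≠ (ω_{n-1}+ω_n, ω_{n-2})`: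
then `β_{n-2,n-1} ∈ R(λ₁,λ₂)` and for each `β_{i,j} ∈ R(λ₁,λ₂)` one has
`β_{i,j} − β_{n-2,n-1} = α_{i,n-3} + α_{j,n-2}` in the root lattice. -/
theorem stmt6 (n : ℕ) (hn : 4 ≤ n) (l1 l2 : ℕ → ℤ) (h : Interlacing n l1 l2)
    (h1 : l1 (n - 1) + l1 n = 2) (h2 : l1 (n - 2) + l2 (n - 2) = 0)
    (hne : ¬(∀ i, 1 ≤ i → i ≤ n →
      l1 i = (if i = n - 1 ∨ i = n then (1 : ℤ) else 0) ∧
      l2 i = (if i = n - 2 then (1 : ℤ) else 0))) :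
    |hBeta n l1 (n - 2) (n - 1) - hBeta n l2 (n - 2) (n - 1)| = 2 ∧
      ∀ i j, 1 ≤ i → i < j → j ≤ n - 1 → |hBeta n l1 i j - hBeta n l2 i j| = 2 →
        ∀ k, betaCoeff n i j k - betaCoeff n (n - 2) (n - 1) k =
          alphaCoeff i (n - 3) k + alphaCoeff j (n - 2) k :=
  stmt6_general n hn l1 l2 h h1 h2
end

section
/- Let (λ₁, λ₂) be an interlacing pair of type D_n weights with λ₁(h_{n-1}) = 1 and λ₁(h_n) = λ₂(h_n) = λ₂(h_{n-1}) = 0. Then for all 1 ≤ i < j ≤ n-1: (λ₁ − λ₂)(h_{i,n-2}) ≤ 0, (λ₁ − λ₂)(h_{j,n-2}) ≤ 0, and consequently λ₁(h_{β_{i,j}}) − λ₂(h_{β_{i,j}}) ≤ 1. -/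
/-!
Put `d = λ₁ - λ₂`, so `d` takes values in `{-1, 0, 1}`, and by the interlacing condition for
`λ₁` any two `+1`'s of `d` are separated by a `-1`. Hence every sum of `d` over an interval of
indices below `n` is at most `1`. Since `d (n - 1) = 1`, the sums `(λ₁ - λ₂)(h_{a,n-2})` are
then `≤ 0`, and
`(λ₁ - λ₂)(h_{β_{i,j}}) = (λ₁ - λ₂)(h_{i,n-2}) + 1 + (λ₁ - λ₂)(h_{j,n-2}) ≤ 1`.
-/

open Finset

section Alternating

variable {d : ℕ → ℤ} {a b : ℕ}

/-- The strengthening of `sum_Icc_le_one_of_alternating` that survives induction on `b`. -/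
theorem sum_Ico_nonpos_or_eq_one_of_alternating
    (hd : ∀ s, a ≤ s → s < b → -1 ≤ d s ∧ d s ≤ 1)
    (halt : ∀ i j, a ≤ i → i < j → j < b → d i = 1 → d j = 1 →
      ∃ s, i < s ∧ s < j ∧ d s = -1) :
    ∑ s ∈ Ico a b, d s ≤ 0 ∨ (∑ s ∈ Ico a b, d s = 1 ∧
      ∃ i, a ≤ i ∧ i < b ∧ d i = 1 ∧ ∀ s, i < s → s < b → d s ≠ -1) := by
  induction b with
  | zero => simp
  | succ b ih =>
    rcases lt_or_ge b a with hba | hab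
    · simp [Ico_eq_empty_of_le (show b + 1 ≤ a by omega)]
    rw [sum_Ico_succ_top hab]
    have hdb := hd b hab (by omega)
    rcases ih (fun s hs hsb => hd s hs (by omega)) (fun i j hi hij hj => halt i j hi hij (by omega))
      with hle | ⟨heq, i, hai, hib, hdi, hnone⟩
    · by_cases hpos : ∑ s ∈ Ico a b, d s + d b ≤ 0
      · exact .inl hpos
      · exact .inr ⟨by omega, b, hab, by omega, by omega, fun s hs hs' => by omega⟩
    · by_cases hdb1 : d b = 1
      · obtain ⟨s, his, hsb, hds⟩ := halt i b hai hib (by omega) hdi hdb1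
        exact absurd hds (hnone s his hsb)
      by_cases hdb0 : d b = 0
      · refine .inr ⟨by omega, i, hai, by omega, hdi, fun s hs hs' => ?_⟩
        rcases (show s < b ∨ s = b by omega) with hsb | rfl
        · exact hnone s hs hsb
        · omega
      · exact .inl (by omega)

theorem sum_Icc_le_one_of_alternating
    (hd : ∀ s, a ≤ s → s ≤ b → -1 ≤ d s ∧ d s ≤ 1)
    (halt : ∀ i j, a ≤ i → i < j → j ≤ b → d i = 1 → d j = 1 →
      ∃ s, i < s ∧ s < j ∧ d s = -1) :
    ∑ s ∈ Icc a b, d s ≤ 1 := by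
  rw [← Ico_add_one_right_eq_Icc]
  rcases sum_Ico_nonpos_or_eq_one_of_alternating (b := b + 1)
    (fun s hs hsb => hd s hs (by omega)) (fun i j hi hij hj => halt i j hi hij (by omega))
    with h | ⟨h, -⟩ <;> omega

end Alternating

theorem hIcc_sub_hIcc (l1 l2 : ℕ → ℤ) (a b : ℕ) :
    hIcc l1 a b - hIcc l2 a b = ∑ s ∈ Icc a b, (l1 s - l2 s) := by
  simp only [hIcc, sum_sub_distrib]

theorem hIcc_pred_eq_add {lam : ℕ → ℤ} {a n : ℕ} (ha : a ≤ n - 1) (hn : 2 ≤ n) :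
    hIcc lam a (n - 1) = hIcc lam a (n - 2) + lam (n - 1) := by
  obtain ⟨m, rfl⟩ : ∃ m, n = m + 2 := ⟨n - 2, by omega⟩
  simpa [hIcc] using sum_Icc_succ_top (show a ≤ m + 1 by omega) lam

theorem Interlacing.hIcc_sub_le_one {n : ℕ} {l1 l2 : ℕ → ℤ} (h : Interlacing n l1 l2)
    {a b : ℕ} (ha : 1 ≤ a) (hb : b ≤ n - 1) : hIcc l1 a b - hIcc l2 a b ≤ 1 := by
  obtain ⟨hval, -, -, hsep⟩ := h
  rw [hIcc_sub_hIcc]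
  refine sum_Icc_le_one_of_alternating (fun s hs hsb => ?_) fun i j hi hij hj hdi hdj => ?_
  · have := hval s (by omega) (by omega)
    omega
  · have hi' := hval i (by omega) (by omega)
    have hj' := hval j (by omega) (by omega)
    obtain ⟨s, his, hsj, hs⟩ :=
      (hsep i j (by omega) hij (by omega) (by omega)).1 (by omega) (by omega)
    have := hval s (by omega) (by omega)
    exact ⟨s, his, hsj, by omega⟩

theorem Interlacing.hIcc_sub_nonpos {n : ℕ} {l1 l2 : ℕ → ℤ} (h : Interlacing n l1 l2)
    (h1 : l1 (n - 1) = 1) (h3 : l2 (n - 1) = 0) {a : ℕ} (ha : 1 ≤ a) (han : a ≤ n - 1) :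
    hIcc l1 a (n - 2) - hIcc l2 a (n - 2) ≤ 0 := by
  have := h.hIcc_sub_le_one ha le_rfl
  rw [hIcc_pred_eq_add han (by omega), hIcc_pred_eq_add han (by omega)] at this
  omega

theorem stmt13_general (n : ℕ) (l1 l2 : ℕ → ℤ) (h : Interlacing n l1 l2)
    (h1 : l1 (n - 1) = 1) (h2 : l1 n = 0) (h3 : l2 (n - 1) = 0) (h4 : l2 n = 0) :
    ∀ i j, 1 ≤ i → i < j → j ≤ n - 1 →
      (hIcc l1 i (n - 2) - hIcc l2 i (n - 2) ≤ 0 ∧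
        hIcc l1 j (n - 2) - hIcc l2 j (n - 2) ≤ 0 ∧
        hBeta n l1 i j - hBeta n l2 i j ≤ 1) := by
  intro i j hi hij hj
  have hi0 := h.hIcc_sub_nonpos h1 h3 hi (by omega)
  have hj0 := h.hIcc_sub_nonpos h1 h3 (by omega) hj
  refine ⟨hi0, hj0, ?_⟩
  simp only [hBeta, hIcc_pred_eq_add (show i ≤ n - 1 by omega) (show 2 ≤ n by omega),
    h1, h2, h3, h4]
  omega

/-- If `λ₁(h_{n-1}) = 1` and `λ₁(h_n) = λ₂(h_{n-1}) = λ₂(h_n) = 0` for an interlacing pair,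
then `(λ₁−λ₂)(h_{i,n-2}) ≤ 0`, `(λ₁−λ₂)(h_{j,n-2}) ≤ 0`, and
`λ₁(h_{β_{i,j}}) − λ₂(h_{β_{i,j}}) ≤ 1`. -/
theorem stmt13 (n : ℕ) (hn : 4 ≤ n) (l1 l2 : ℕ → ℤ) (h : Interlacing n l1 l2)
    (h1 : l1 (n - 1) = 1) (h2 : l1 n = 0) (h3 : l2 (n - 1) = 0) (h4 : l2 n = 0) :
    ∀ i j, 1 ≤ i → i < j → j ≤ n - 1 →
      (hIcc l1 i (n - 2) - hIcc l2 i (n - 2) ≤ 0 ∧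
        hIcc l1 j (n - 2) - hIcc l2 j (n - 2) ≤ 0 ∧
        hBeta n l1 i j - hBeta n l2 i j ≤ 1) :=
  stmt13_general n l1 l2 h h1 h2 h3 h4
end
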